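/- Suppose Z_∼ and Z_≁ are independent ℕ-valued random variables such that P(Z_∼ = 0) = 0, P(Z_≁ = 0) > 0, and for all k ≥ 1, P(Z_∼ ≥ k) ≥ P(Z_≁ ≥ k). If P(Z_∼ ≠ Z_≁) > 0, then P(Z_∼ > Z_≁ | Z_∼ ≠ Z_≁) > 1/2. -/

import Mathlib

open MeasureTheory ProbabilityTheory Set
open scoped ENNReal

/-!
Let `ν`, `ρ` be the laws of `Z∼`, `Z≁`. Stochastic dominance gives
`P(Z∼ < Z≁) = ∫ ρ(> x) dν ≤ ∫ ν(> x) dν` and `∫ ν(< x) dν ≤ ∫ ρ(< x) dν = P(Z≁ < Z∼)`,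
and the two middle terms agree: both are the probability that one of two independent copies
of `Z∼` is below the other. The second inequality is strict at the least atom `k` of `ν`:
there `ν(< k) = 0`, while `k ≥ 1` gives `ρ(< k) ≥ P(Z≁ = 0) > 0`.
So `P(Z∼ > Z≁) > P(Z∼ < Z≁)`, i.e. the AUC exceeds `1/2`.
-/

lemma ENNReal.half_lt_div_add_of_lt {a b : ℝ≥0∞} (ha : a ≠ ∞) (hba : b < a) :
    1 / 2 < a / (a + b) := by
  have ha0 : a ≠ 0 := (hba.trans_le' bot_le).ne'
  calc 1 / 2 = a / (a + a) := by rw [← two_mul, ← ENNReal.mul_div_mul_right 1 2 ha0 ha, one_mul]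
    _ < a / (a + b) := ENNReal.div_lt_div_left ha0 ha (ENNReal.add_lt_add_left ha hba)

namespace MeasureTheory.Measure

lemma exists_measure_singleton_ne_zero_measure_Iio_eq_zero {α : Type*} [Preorder α]
    [WellFoundedLT α] [Countable α] [MeasurableSpace α] (ν : Measure α) [NeZero ν] :
    ∃ k, ν {k} ≠ 0 ∧ ν (Iio k) = 0 := by
  obtain ⟨k, hk⟩ : ∃ k, ν {k} ≠ 0 := by
    by_contra! h
    exact NeZero.ne ν (measure_univ_eq_zero.1
      ((measure_null_iff_singleton (to_countable _)).2 fun x _ => h x))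
  obtain ⟨k, hk, hmin⟩ := wellFounded_lt.has_min {k | ν {k} ≠ 0} ⟨k, hk⟩
  exact ⟨k, hk, (measure_null_iff_singleton (to_countable _)).2 fun x hx =>
    not_not.1 fun h => hmin x h hx⟩

variable {α : Type*} [LinearOrder α] [MeasurableSpace α] [MeasurableSingletonClass α]
  [Countable α]

lemma prod_apply_snd_lt_fst (ν ρ : Measure α) [SFinite ρ] :
    ν.prod ρ {p | p.2 < p.1} = ∫⁻ x, ρ (Iio x) ∂ν :=
  prod_apply (to_countable _).measurableSet

lemma prod_apply_fst_lt_snd (ν ρ : Measure α) [SFinite ρ] :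
    ν.prod ρ {p | p.1 < p.2} = ∫⁻ x, ρ (Ioi x) ∂ν :=
  prod_apply (to_countable _).measurableSet

lemma prod_self_fst_lt_snd_eq (ν : Measure α) [SFinite ν] :
    ν.prod ν {p | p.1 < p.2} = ν.prod ν {p | p.2 < p.1} := by
  nth_rewrite 1 [← prod_swap]
  exact map_apply measurable_swap (to_countable _).measurableSet

theorem prod_fst_lt_snd_lt_prod_snd_lt_fst (ν ρ : Measure α) [IsProbabilityMeasure ν]
    [IsProbabilityMeasure ρ] (hdom : ∀ s : Set α, IsUpperSet s → ρ s ≤ ν s) {k : α}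
    (hk : ν {k} ≠ 0) (hlt : ν (Iio k) < ρ (Iio k)) :
    ν.prod ρ {p | p.1 < p.2} < ν.prod ρ {p | p.2 < p.1} := by
  have hIio : ∀ x, ν (Iio x) ≤ ρ (Iio x) := fun x => by
    rw [← compl_Ici, prob_compl_eq_one_sub (to_countable _).measurableSet,
      prob_compl_eq_one_sub (to_countable _).measurableSet]
    exact tsub_le_tsub_left (hdom _ (isUpperSet_Ici x)) 1
  calc ν.prod ρ {p | p.1 < p.2} = ∫⁻ x, ρ (Ioi x) ∂ν := prod_apply_fst_lt_snd ν ρ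
    _ ≤ ∫⁻ x, ν (Ioi x) ∂ν := lintegral_mono fun x => hdom _ (isUpperSet_Ioi x)
    _ = ν.prod ν {p | p.2 < p.1} := by rw [← prod_apply_fst_lt_snd, prod_self_fst_lt_snd_eq]
    _ = ∫⁻ x, ν (Iio x) ∂ν := prod_apply_snd_lt_fst ν ν
    _ < ∫⁻ x, ρ (Iio x) ∂ν :=
        lintegral_strict_mono_of_ae_le_of_ae_lt_on (measurable_of_countable _).aemeasurable
          (by rw [← prod_apply_snd_lt_fst]; exact measure_ne_top _ _)
          (Filter.Eventually.of_forall hIio) hk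
          (Filter.Eventually.of_forall fun _ hx => hx ▸ hlt)
    _ = ν.prod ρ {p | p.2 < p.1} := (prod_apply_snd_lt_fst ν ρ).symm

end MeasureTheory.Measure

lemma Nat.measure_le_of_isUpperSet {ν ρ : Measure ℕ} [IsProbabilityMeasure ν]
    [IsProbabilityMeasure ρ] (h : ∀ k, 1 ≤ k → ρ (Ici k) ≤ ν (Ici k)) {s : Set ℕ}
    (hs : IsUpperSet s) : ρ s ≤ ν s := by
  obtain rfl | ⟨k, rfl⟩ := hs.eq_empty_or_Ici
  · simp
  · rcases Nat.eq_zero_or_pos k with rfl | hk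
    · simp
    · exact h k hk

theorem auc_gt_half_of_zero_separation_general
    {Ω : Type*} [MeasurableSpace Ω] (μ : Measure Ω) [IsProbabilityMeasure μ]
    (X Y : Ω → ℕ) (hX : Measurable X) (hY : Measurable Y)
    (hindep : IndepFun X Y μ)
    (hX0 : μ {ω | X ω = 0} = 0)
    (hY0 : 0 < μ {ω | Y ω = 0})
    (hdom : ∀ k : ℕ, 1 ≤ k → μ {ω | k ≤ Y ω} ≤ μ {ω | k ≤ X ω}) :
    1 / 2 < μ {ω | Y ω < X ω} / μ {ω | X ω ≠ Y ω} := by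
  have hlaw (s : Set (ℕ × ℕ)) :
      μ ((fun ω => (X ω, Y ω)) ⁻¹' s) = (μ.map X).prod (μ.map Y) s := by
    rw [← (indepFun_iff_map_prod_eq_prod_map_map hX.aemeasurable hY.aemeasurable).1 hindep,
      Measure.map_apply (hX.prodMk hY) (to_countable s).measurableSet]
  have hmapX (s : Set ℕ) : μ.map X s = μ (X ⁻¹' s) :=
    Measure.map_apply hX (to_countable s).measurableSet
  have hmapY (s : Set ℕ) : μ.map Y s = μ (Y ⁻¹' s) :=
    Measure.map_apply hY (to_countable s).measurableSet
  have := Measure.isProbabilityMeasure_map (μ := μ) hX.aemeasurable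
  have := Measure.isProbabilityMeasure_map (μ := μ) hY.aemeasurable
  obtain ⟨k, hk, hXk⟩ := (μ.map X).exists_measure_singleton_ne_zero_measure_Iio_eq_zero
  have hk0 : k ≠ 0 := by rintro rfl; exact hk (by rwa [hmapX])
  have hYk : 0 < μ.map Y (Iio k) := by
    rw [hmapY]
    exact hY0.trans_le <| measure_mono fun ω (h : Y ω = 0) =>
      show Y ω < k from h ▸ Nat.pos_of_ne_zero hk0
  have hlt := Measure.prod_fst_lt_snd_lt_prod_snd_lt_fst (μ.map X) (μ.map Y)
    (fun _ => Nat.measure_le_of_isUpperSet fun j hj => by rw [hmapX, hmapY]; exact hdom j hj)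
    hk (hXk ▸ hYk)
  rw [← hlaw, ← hlaw] at hlt
  have hsplit : μ {ω | X ω ≠ Y ω} = μ {ω | Y ω < X ω} + μ {ω | X ω < Y ω} := by
    rw [show {ω | X ω ≠ Y ω} = {ω | Y ω < X ω} ∪ {ω | X ω < Y ω} from
      ext fun ω => ne_comm.trans ne_iff_lt_or_gt]
    exact measure_union (disjoint_left.2 fun ω (h : Y ω < X ω) => lt_asymm h)
      (measurableSet_lt hX hY)
  rw [hsplit]
  exact ENNReal.half_lt_div_add_of_lt (measure_ne_top _ _) hlt

/-- If `Z∼` never takes value `0`, `Z≁` is `0` with positive probability, and `Z∼`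
stochastically dominates `Z≁`, then the AUC `P(Z∼ > Z≁ | Z∼ ≠ Z≁) > 1/2`. -/
theorem auc_gt_half_of_zero_separation
    {Ω : Type*} [MeasurableSpace Ω] (μ : Measure Ω) [IsProbabilityMeasure μ]
    (X Y : Ω → ℕ) (hX : Measurable X) (hY : Measurable Y)
    (hindep : IndepFun X Y μ)
    (hX0 : μ {ω | X ω = 0} = 0)
    (hY0 : 0 < μ {ω | Y ω = 0})
    (hdom : ∀ k : ℕ, 1 ≤ k → μ {ω | k ≤ Y ω} ≤ μ {ω | k ≤ X ω})
    (hne : 0 < μ {ω | X ω ≠ Y ω}) :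
    1 / 2 < μ {ω | Y ω < X ω} / μ {ω | X ω ≠ Y ω} :=
  auc_gt_half_of_zero_separation_general μ X Y hX hY hindep hX0 hY0 hdom
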